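/- arXiv:0907.2870 — 10 statements merged into one kernel-verified Lean document; each statement's English description precedes it below -/
import Mathlib

section
/- For any positive integer n, the least common multiple of the binomial coefficients C(n,0), C(n,1), ..., C(n,n) equals lcm(1, 2, ..., n+1) divided by n+1; equivalently, (n+1) · lcm(C(n,0), C(n,1), ..., C(n,n)) = lcm(1, 2, ..., n+1). -/
/-!
Since `(n + 1) * C(n, k) = C(n + 1, k + 1) * (k + 1)`, the left side is the lcm of `C(N, m) * m`
over `1 ≤ m ≤ N = n + 1`. Each `m` divides `C(N, m) * m`, and conversely `C(N, m) * m` divides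
`lcm(1, …, N)`: by Kummer, `v_p(C(N, m))` counts the carries when adding `m` and `N - m` in base
`p`; a carry at position `i` forces `p ^ i ∤ m`, so the carry positions and the `i ≤ v_p(m)` are
disjoint subsets of `[1, log_p N]`, whence `v_p(C(N, m)) + v_p(m) ≤ log_p N`, which is
`v_p(lcm(1, …, N))`.
-/

open Finset

theorem Finset.lcm_mul_left {α β : Type*} [CommMonoidWithZero α]
    [StrongNormalizedGCDMonoid α] {s : Finset β} (hs : s.Nonempty) (f : β → α) (a : α) :
    (s.lcm fun x ↦ a * f x) = normalize a * s.lcm f := by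
  classical
  induction hs using Nonempty.cons_induction with
  | singleton b => simp only [lcm_singleton, normalize_mul]
  | cons b s _ _ ih =>
    rw [cons_eq_insert, lcm_insert, lcm_insert, ih, ← _root_.lcm_mul_left,
      lcm_eq_of_associated_right ((normalize_associated a).mul_right _)]

namespace Nat

theorem factorization_choose_add_factorization_le_log {p n k : ℕ} (hp : p.Prime) (hkn : k ≤ n) :
    (choose n k).factorization p + k.factorization p ≤ log p n := by
  rcases eq_or_ne k 0 with rfl | hk0
  · simp
  have hdisj : Disjoint {i ∈ Ico 1 (log p n + 1) | p ^ i ≤ k % p ^ i + (n - k) % p ^ i}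
      {i ∈ Ico 1 (log p n + 1) | p ^ i ∣ k} := by
    simp +contextual [disjoint_right, dvd_iff_mod_eq_zero, Nat.mod_lt _ (pow_pos hp.pos _)]
  rw [factorization_choose hp hkn (lt_add_one _),
    factorization_eq_card_pow_dvd_of_lt hp (pos_of_ne_zero hk0)
      (hkn.trans_lt (lt_pow_succ_log_self hp.one_lt n)),
    ← card_union_of_disjoint hdisj, filter_union_right]
  exact (card_filter_le ..).trans_eq (card_Ico _ _)

theorem choose_mul_dvd_lcmUpto {n k : ℕ} (hk0 : k ≠ 0) (hkn : k ≤ n) :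
    choose n k * k ∣ lcmUpto n := by
  rw [← factorization_prime_le_iff_dvd (mul_ne_zero (choose_ne_zero hkn) hk0) (lcmUpto_ne_zero n)]
  intro p hp
  rw [factorization_mul (choose_ne_zero hkn) hk0, factorization_lcmUpto n hp, Finsupp.add_apply]
  exact factorization_choose_add_factorization_le_log hp hkn

theorem lcm_Icc_choose_mul (n : ℕ) : (Icc 1 n).lcm (fun k ↦ choose n k * k) = lcmUpto n := by
  refine Nat.dvd_antisymm (Finset.lcm_dvd fun k hk ↦ ?_)
    (lcm_mono_fun fun k _ ↦ dvd_mul_left k _)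
  obtain ⟨hk1, hkn⟩ := mem_Icc.mp hk
  exact choose_mul_dvd_lcmUpto (one_le_iff_ne_zero.mp hk1) hkn

end Nat

theorem farhi_binomial_lcm_general (n : ℕ) :
    (n + 1) * (Finset.range (n + 1)).lcm (n.choose) = (Finset.Icc 1 (n + 1)).lcm id := by
  have hshift : (Icc 0 n).image (· + 1) = Icc 1 (n + 1) := by simp
  calc (n + 1) * (range (n + 1)).lcm n.choose
      = (range (n + 1)).lcm fun k ↦ (n + 1) * n.choose k := by
        rw [Finset.lcm_mul_left nonempty_range_add_one, normalize_eq]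
    _ = (Icc 0 n).lcm fun k ↦ (n + 1).choose (k + 1) * (k + 1) := by
        simp only [Nat.add_one_mul_choose_eq, Nat.range_succ_eq_Icc_zero]
    _ = (Icc 1 (n + 1)).lcm fun k ↦ (n + 1).choose k * k := by
        rw [← hshift, lcm_image]; rfl
    _ = (Icc 1 (n + 1)).lcm id := Nat.lcm_Icc_choose_mul (n + 1)

/-- Farhi's identity: `(n+1) * lcm(C(n,0), ..., C(n,n)) = lcm(1, 2, ..., n+1)`. -/
theorem farhi_binomial_lcm (n : ℕ) (hn : 0 < n) :
    (n + 1) * (Finset.range (n + 1)).lcm (n.choose) = (Finset.Icc 1 (n + 1)).lcm id :=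
  farhi_binomial_lcm_general n
end

section
/- For any positive integer n, in the polynomial ring ℤ[q] the product [n+1]_q · lcm([n choose 0]_q, [n choose 1]_q, ..., [n choose n]_q) is equal (up to units, i.e. is associated) to lcm([1]_q, [2]_q, ..., [n+1]_q). -/
/-!
Over `ℤ` the cyclotomic polynomials are pairwise non-associated primes, and
`[m]_q = ∏_{1 < d ∣ m} Φ_d`, so `[m]_q! = ∏_{d ≥ 2} Φ_d ^ ⌊m/d⌋`. Hence `[n choose k]_q` is the product of
the `Φ_d` for which adding `k` and `n - k` carries modulo `d`, i.e. `n mod d < k mod d`. Such a `k ≤ n`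
exists exactly when `2 ≤ d ≤ n + 1` and `d ∤ n + 1`, so the lcm of the `q`-binomials is the product of
those `Φ_d`. The complementary `Φ_d` with `1 < d ∣ n + 1` multiply to `[n+1]_q`, and altogether this is
`∏_{2 ≤ d ≤ n+1} Φ_d = lcm([1]_q, …, [n+1]_q)`.
-/

open Polynomial

/-- The `q`-integer `[n]_q = 1 + q + ⋯ + q^{n-1}` as a polynomial in `ℤ[q]`. -/
noncomputable def qInt (n : ℕ) : Polynomial ℤ := ∑ i ∈ Finset.range n, X ^ i

/-- The `q`-factorial `[n]_q! = ∏_{k=1}^n [k]_q`. -/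
noncomputable def qFact (n : ℕ) : Polynomial ℤ := ∏ k ∈ Finset.range n, qInt (k + 1)

open Finset

lemma prod_cyclotomic_dvd {s : Finset ℕ} {x : ℤ[X]} (h : ∀ d ∈ s, cyclotomic d ℤ ∣ x) :
    ∏ d ∈ s, cyclotomic d ℤ ∣ x := by
  have hmonic : (∏ d ∈ s, cyclotomic d ℤ).Monic :=
    monic_prod_of_monic _ _ fun d _ => cyclotomic.monic d ℤ
  -- distinct cyclotomic polynomials are coprime over `ℚ`, though not over `ℤ`
  rw [← map_dvd_map (Int.castRingHom ℚ) (Int.castRingHom ℚ).injective_int hmonic, Polynomial.map_prod]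
  simp only [map_cyclotomic]
  refine prod_dvd_of_coprime (fun a _ b _ hab => cyclotomic.isCoprime_rat hab) fun d hd => ?_
  simpa only [map_cyclotomic] using Polynomial.map_dvd (Int.castRingHom ℚ) (h d hd)

lemma Finset.lcm_prod_cyclotomic_associated {ι : Type*} (s : Finset ι) (S : ι → Finset ℕ) :
    Associated (s.lcm fun i => ∏ d ∈ S i, cyclotomic d ℤ) (∏ d ∈ s.biUnion S, cyclotomic d ℤ) := by
  refine associated_of_dvd_dvd (lcm_dvd fun i hi => ?_) (prod_cyclotomic_dvd fun d hd => ?_)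
  · exact prod_dvd_prod_of_subset _ _ _ (subset_biUnion_of_mem S hi)
  · obtain ⟨i, hi, hd⟩ := mem_biUnion.mp hd
    exact (dvd_prod_of_mem (fun d => cyclotomic d ℤ) hd).trans
      (dvd_lcm (f := fun i => ∏ d ∈ S i, cyclotomic d ℤ) hi)

lemma qInt_eq_prod_cyclotomic {m N : ℕ} (hm : 0 < m) (hN : m ≤ N) :
    qInt m = ∏ d ∈ Icc 2 N with d ∣ m, cyclotomic d ℤ := by
  rw [qInt, ← prod_cyclotomic_eq_geom_sum hm]
  refine prod_congr (ext fun d => ?_) fun _ _ => rfl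
  simp only [mem_erase, Nat.mem_divisors, mem_filter, mem_Icc]
  constructor
  · rintro ⟨hd1, hdm, -⟩
    have := Nat.pos_of_dvd_of_pos hdm hm
    exact ⟨⟨by omega, (Nat.le_of_dvd hm hdm).trans hN⟩, hdm⟩
  · rintro ⟨⟨hd2, -⟩, hdm⟩
    exact ⟨by omega, hdm, hm.ne'⟩

lemma qFact_eq_prod_cyclotomic_pow {m N : ℕ} (hN : m ≤ N) :
    qFact m = ∏ d ∈ Icc 2 N, cyclotomic d ℤ ^ (m / d) := by
  induction m with
  | zero => simp [qFact]
  | succ m ih =>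
    rw [qFact, prod_range_succ, ← qFact, ih (by omega),
      qInt_eq_prod_cyclotomic m.succ_pos hN, prod_filter, ← prod_mul_distrib]
    refine prod_congr rfl fun d _ => ?_
    rw [Nat.succ_div, pow_add]
    split_ifs <;> simp

lemma qFact_monic (m : ℕ) : (qFact m).Monic :=
  monic_prod_of_monic _ _ fun k _ => monic_geom_sum_X k.succ_ne_zero

lemma Nat.div_eq_div_add_sub_div_add_ite {n k d : ℕ} (hd : 0 < d) (hk : k ≤ n) :
    n / d = k / d + (n - k) / d + if n % d < k % d then 1 else 0 := by
  have hsum : (k % d + (n - k) % d) % d = n % d := by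
    rw [← Nat.add_mod, Nat.add_sub_cancel' hk]
  have := Nat.mod_lt k hd
  have := Nat.mod_lt (n - k) hd
  have hcarry : d ≤ k % d + (n - k) % d ↔ n % d < k % d := by
    constructor
    · intro h
      rw [Nat.mod_eq_sub_mod h, Nat.mod_eq_of_lt (by omega)] at hsum
      omega
    · intro h
      by_contra h'
      rw [Nat.mod_eq_of_lt (by omega)] at hsum
      omega
  conv_lhs => rw [← Nat.add_sub_cancel' hk]
  rw [Nat.add_div hd]
  simp only [hcarry]

lemma eq_prod_cyclotomic_of_mul_qFact_eq {n k N : ℕ} (hk : k ≤ n) (hN : n ≤ N) {b : ℤ[X]}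
    (hb : b * (qFact k * qFact (n - k)) = qFact n) :
    b = ∏ d ∈ Icc 2 N with n % d < k % d, cyclotomic d ℤ := by
  have hfact : qFact n =
      (∏ d ∈ Icc 2 N with n % d < k % d, cyclotomic d ℤ) * (qFact k * qFact (n - k)) := by
    simp only [qFact_eq_prod_cyclotomic_pow hN, qFact_eq_prod_cyclotomic_pow (hk.trans hN),
      qFact_eq_prod_cyclotomic_pow ((n.sub_le k).trans hN), prod_filter,
      ← prod_mul_distrib]
    refine prod_congr rfl fun d hd => ?_
    rw [Nat.div_eq_div_add_sub_div_add_ite (lt_of_lt_of_le two_pos (mem_Icc.mp hd).1) hk, pow_add, pow_add]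
    split_ifs <;> ring
  exact mul_right_cancel₀ ((qFact_monic k).mul (qFact_monic (n - k))).ne_zero (hb.trans hfact)

lemma Nat.dvd_add_one_iff_mod_eq_sub_one {n d : ℕ} (hd : 0 < d) : d ∣ n + 1 ↔ n % d = d - 1 := by
  have hr := Nat.mod_lt n hd
  have hdiv := Nat.div_add_mod n d
  rw [Nat.dvd_iff_mod_eq_zero, show n + 1 = d * (n / d) + (n % d + 1) by omega, Nat.mul_add_mod]
  rcases Nat.lt_or_ge (n % d + 1) d with h | h
  · rw [Nat.mod_eq_of_lt h]
    omega
  · rw [show n % d + 1 = d by omega, Nat.mod_self]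
    omega

lemma biUnion_Icc_filter_dvd (n : ℕ) :
    (Icc 1 (n + 1)).biUnion (fun k => {d ∈ Icc 2 (n + 1) | d ∣ k}) =
      Icc 2 (n + 1) := by
  ext d
  simp only [mem_biUnion, mem_filter, mem_Icc]
  constructor
  · rintro ⟨k, -, hd, -⟩
    exact hd
  · intro hd
    exact ⟨d, ⟨by omega, hd.2⟩, hd, dvd_rfl⟩

lemma biUnion_range_filter_mod_lt (n : ℕ) :
    (range (n + 1)).biUnion (fun k => {d ∈ Icc 2 (n + 1) | n % d < k % d}) =
      {d ∈ Icc 2 (n + 1) | ¬ d ∣ n + 1} := by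
  ext d
  simp only [mem_biUnion, mem_range, mem_filter, mem_Icc]
  constructor
  · rintro ⟨k, -, hd, hlt⟩
    have := Nat.mod_lt k (show 0 < d by omega)
    exact ⟨hd, fun hdvd => by rw [Nat.dvd_add_one_iff_mod_eq_sub_one (by omega)] at hdvd; omega⟩
  · rintro ⟨hd, hndvd⟩
    rw [Nat.dvd_add_one_iff_mod_eq_sub_one (by omega)] at hndvd
    have hr := Nat.mod_lt n (show 0 < d by omega)
    have hdn : d ≤ n := by
      by_contra! h
      rw [Nat.mod_eq_of_lt (by omega)] at hndvd
      omega
    have hk : n % d + 1 < d := by omega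
    exact ⟨n % d + 1, by omega, hd, by rw [Nat.mod_eq_of_lt hk]; omega⟩

theorem qfarhi_general (n : ℕ) (B : ℕ → Polynomial ℤ)
    (hB : ∀ k ≤ n, B k * (qFact k * qFact (n - k)) = qFact n) :
    Associated (qInt (n + 1) * (Finset.range (n + 1)).lcm B)
      ((Finset.Icc 1 (n + 1)).lcm fun k => qInt k) := by
  have hlcmB : (range (n + 1)).lcm B = (range (n + 1)).lcm
      fun k => ∏ d ∈ Icc 2 (n + 1) with n % d < k % d, cyclotomic d ℤ :=
    lcm_congr rfl fun k hk => eq_prod_cyclotomic_of_mul_qFact_eq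
      (mem_range_succ_iff.mp hk) n.le_succ (hB k (mem_range_succ_iff.mp hk))
  have hlcmInt : ((Icc 1 (n + 1)).lcm fun k => qInt k) = (Icc 1 (n + 1)).lcm
      fun k => ∏ d ∈ Icc 2 (n + 1) with d ∣ k, cyclotomic d ℤ :=
    lcm_congr rfl fun k hk => by
      simp only [mem_Icc] at hk
      exact qInt_eq_prod_cyclotomic hk.1 hk.2
  rw [hlcmB, hlcmInt]
  refine ((Finset.lcm_prod_cyclotomic_associated _ _).mul_left _).trans ?_
  refine Associated.trans ?_ (Finset.lcm_prod_cyclotomic_associated _ _).symm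
  rw [biUnion_range_filter_mod_lt, biUnion_Icc_filter_dvd, qInt_eq_prod_cyclotomic n.succ_pos le_rfl,
    prod_filter_mul_prod_filter_not]

/-- For a positive integer `n`, if `B k` is the `q`-binomial coefficient
`[n choose k]_q = [n]_q!/([k]_q! [n-k]_q!)` for each `0 ≤ k ≤ n`, then
`[n+1]_q * lcm(B 0, ..., B n)` is associated to `lcm([1]_q, ..., [n+1]_q)` in `ℤ[q]`. -/
theorem qfarhi (n : ℕ) (hn : 0 < n) (B : ℕ → Polynomial ℤ)
    (hB : ∀ k ≤ n, B k * (qFact k * qFact (n - k)) = qFact n) :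
    Associated (qInt (n + 1) * (Finset.range (n + 1)).lcm B)
      ((Finset.Icc 1 (n + 1)).lcm fun k => qInt k) :=
  qfarhi_general n B hB
end

section
/- For any positive integer n, the least common multiple of the q-binomial coefficients [n choose 0]_q, [n choose 1]_q, ..., [n choose n]_q is equal (up to units in ℤ[q], i.e. associated) to the product ∏_d Φ_d(q), where d ranges over all positive integers d ≤ n for which there exists some k with 1 ≤ k ≤ n satisfying ⌊k/d⌋ + ⌊(n-k)/d⌋ < ⌊n/d⌋. -/
open Polynomial
open scoped Classical

private lemma qInt_eq {n : ℕ} (hn : 0 < n) :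
    qInt n = ∏ d ∈ n.divisors.erase 1, cyclotomic d ℤ :=
  (Polynomial.prod_cyclotomic_eq_geom_sum hn ℤ).symm

private lemma qFact_eq (n : ℕ) :
    qFact n = ∏ d ∈ Finset.Icc 2 n, cyclotomic d ℤ ^ (n / d) := by
  induction n with
  | zero => simp [qFact]
  | succ n ih =>
    have h1 : qFact (n + 1) = qFact n * qInt (n + 1) := by
      rw [qFact, qFact, Finset.prod_range_succ]
    rw [h1, ih, qInt_eq (Nat.succ_pos n)]
    have hset : (n + 1).divisors.erase 1 = (Finset.Icc 2 (n + 1)).filter (· ∣ (n + 1)) := by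
      ext d
      simp only [Finset.mem_erase, Nat.mem_divisors, Finset.mem_filter, Finset.mem_Icc]
      constructor
      · rintro ⟨h1d, hdvd, -⟩
        have hd0 : 0 < d := Nat.pos_of_dvd_of_pos hdvd (Nat.succ_pos n)
        have hdle := Nat.le_of_dvd (Nat.succ_pos n) hdvd
        exact ⟨⟨by omega, hdle⟩, hdvd⟩
      · rintro ⟨⟨h2d, -⟩, hdvd⟩
        exact ⟨by omega, hdvd, Nat.succ_ne_zero n⟩
    rw [hset, Finset.prod_filter]
    have h2 : ∀ d ∈ Finset.Icc 2 (n + 1),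
        cyclotomic d ℤ ^ ((n + 1) / d) =
          cyclotomic d ℤ ^ (n / d) * (if d ∣ (n + 1) then cyclotomic d ℤ else 1) := by
      intro d hd
      rw [Nat.succ_div, pow_add]
      congr 1
      split <;> simp
    have h2' : ∏ d ∈ Finset.Icc 2 (n + 1), cyclotomic d ℤ ^ ((n + 1) / d)
        = ∏ d ∈ Finset.Icc 2 (n + 1),
            (cyclotomic d ℤ ^ (n / d) * (if d ∣ (n + 1) then cyclotomic d ℤ else 1)) :=
      Finset.prod_congr rfl h2
    have h3 : ∏ d ∈ Finset.Icc 2 (n + 1),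
        (cyclotomic d ℤ ^ (n / d) * (if d ∣ (n + 1) then cyclotomic d ℤ else 1))
        = (∏ d ∈ Finset.Icc 2 (n + 1), cyclotomic d ℤ ^ (n / d))
          * ∏ d ∈ Finset.Icc 2 (n + 1), (if d ∣ (n + 1) then cyclotomic d ℤ else 1) :=
      Finset.prod_mul_distrib
    rw [h2', h3]
    congr 1
    refine Finset.prod_subset (Finset.Icc_subset_Icc_right (Nat.le_succ n)) ?_
    intro d hd hnd
    have hdn : d = n + 1 := by
      simp only [Finset.mem_Icc] at hd hnd; omega
    subst hdn
    rw [Nat.div_eq_of_lt (Nat.lt_succ_self n), pow_zero]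

private lemma qFact_eq' {k n : ℕ} (h : k ≤ n) :
    qFact k = ∏ d ∈ Finset.Icc 2 n, cyclotomic d ℤ ^ (k / d) := by
  rw [qFact_eq]
  apply Finset.prod_subset (Finset.Icc_subset_Icc_right h)
  intro d hd hnd
  have hkd : k < d := by simp only [Finset.mem_Icc] at hd hnd; omega
  rw [Nat.div_eq_of_lt hkd, pow_zero]

/-- If `B k` is the `q`-binomial coefficient `[n choose k]_q` for each `0 ≤ k ≤ n`, then
`lcm(B 0, ..., B n)` is associated in `ℤ[q]` to the product of the cyclotomic polynomials
`Φ_d(q)` over all positive integers `d ≤ n` such that `⌊k/d⌋ + ⌊(n-k)/d⌋ < ⌊n/d⌋` holds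
for some `1 ≤ k ≤ n`. -/
theorem lcm_qbinom_eq_prod_cyclotomic (n : ℕ) (hn : 0 < n) (B : ℕ → Polynomial ℤ)
    (hB : ∀ k ≤ n, B k * (qFact k * qFact (n - k)) = qFact n) :
    Associated ((Finset.range (n + 1)).lcm B)
      (∏ d ∈ (Finset.Icc 1 n).filter
        (fun d => ∃ k ∈ Finset.Icc 1 n, k / d + (n - k) / d < n / d), cyclotomic d ℤ) := by
  -- basic divisibility facts about floors
  have hdiv : ∀ k ≤ n, ∀ d ∈ Finset.Icc 2 n,
      k / d + (n - k) / d ≤ n / d ∧ n / d ≤ k / d + (n - k) / d + 1 := by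
    intro k hk d hd
    have hd0 : 0 < d := by simp only [Finset.mem_Icc] at hd; omega
    have hadd := Nat.add_div (a := k) (b := n - k) hd0
    rw [Nat.add_sub_cancel' hk] at hadd
    split_ifs at hadd <;> omega
  -- formula for B k
  have hBk : ∀ k ≤ n, B k = ∏ d ∈ (Finset.Icc 2 n).filter
      (fun d => k / d + (n - k) / d < n / d), cyclotomic d ℤ := by
    intro k hk
    have hEq := hB k hk
    rw [qFact_eq' hk, qFact_eq' (Nat.sub_le n k), qFact_eq n, ← Finset.prod_mul_distrib] at hEq
    have hEq2 : B k * ∏ d ∈ Finset.Icc 2 n, cyclotomic d ℤ ^ (k / d + (n - k) / d)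
        = ∏ d ∈ Finset.Icc 2 n, cyclotomic d ℤ ^ (n / d) := by
      rw [← hEq]
      congr 1
      exact Finset.prod_congr rfl fun d _ => by rw [pow_add]
    have hsplit : ∏ d ∈ Finset.Icc 2 n, cyclotomic d ℤ ^ (n / d)
        = (∏ d ∈ Finset.Icc 2 n, cyclotomic d ℤ ^ (n / d - (k / d + (n - k) / d)))
          * ∏ d ∈ Finset.Icc 2 n, cyclotomic d ℤ ^ (k / d + (n - k) / d) := by
      rw [← Finset.prod_mul_distrib]
      refine Finset.prod_congr rfl fun d hd => ?_
      rw [← pow_add]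
      congr 1
      have := (hdiv k hk d hd).1
      omega
    have hne : (∏ d ∈ Finset.Icc 2 n, cyclotomic d ℤ ^ (k / d + (n - k) / d)) ≠ 0 := by
      apply Finset.prod_ne_zero_iff.mpr
      intro d _
      exact pow_ne_zero _ (cyclotomic_ne_zero d ℤ)
    have hB2 : B k = ∏ d ∈ Finset.Icc 2 n, cyclotomic d ℤ ^ (n / d - (k / d + (n - k) / d)) :=
      mul_right_cancel₀ hne (by rw [hEq2, hsplit])
    rw [hB2, Finset.prod_filter]
    refine Finset.prod_congr rfl fun d hd => ?_
    by_cases hc : k / d + (n - k) / d < n / d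
    · rw [if_pos hc]
      have h2 := (hdiv k hk d hd).2
      have h3 : n / d - (k / d + (n - k) / d) = 1 := by omega
      rw [h3, pow_one]
    · rw [if_neg hc]
      have h3 : n / d - (k / d + (n - k) / d) = 0 := by omega
      rw [h3, pow_zero]
  have hprime : ∀ d : ℕ, 2 ≤ d → Prime (cyclotomic d ℤ) := fun d hd =>
    UniqueFactorizationMonoid.irreducible_iff_prime.mp
      (Polynomial.cyclotomic.irreducible (by omega))
  have hdistinct : ∀ d e : ℕ, 2 ≤ d → 2 ≤ e → cyclotomic d ℤ ∣ cyclotomic e ℤ → d = e := by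
    intro d e hd he hdvd
    have h1 := Polynomial.cyclotomic.irreducible (n := d) (by omega)
    have h2 := Polynomial.cyclotomic.irreducible (n := e) (by omega)
    have h3 := h1.associated_of_dvd h2 hdvd
    exact Polynomial.cyclotomic_injective
      (Polynomial.eq_of_monic_of_associated (cyclotomic.monic d ℤ) (cyclotomic.monic e ℤ) h3)
  set T2 : Finset ℕ := (Finset.Icc 2 n).filter
    (fun d => ∃ k ∈ Finset.Icc 1 n, k / d + (n - k) / d < n / d) with hT2
  set L : Polynomial ℤ := (Finset.range (n + 1)).lcm B with hL
  -- L divides the product over T2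
  have hsub : ∀ k ≤ n, (Finset.Icc 2 n).filter
      (fun d => k / d + (n - k) / d < n / d) ⊆ T2 := by
    intro k hk d hd
    simp only [Finset.mem_filter, hT2] at hd ⊢
    refine ⟨hd.1, ?_⟩
    rcases Nat.eq_zero_or_pos k with rfl | hk1
    · exfalso
      have := hd.2
      simp only [Nat.zero_div, Nat.sub_zero, zero_add] at this
      omega
    · exact ⟨k, Finset.mem_Icc.mpr ⟨hk1, hk⟩, hd.2⟩
  have hLdvd : L ∣ ∏ d ∈ T2, cyclotomic d ℤ := by
    apply Finset.lcm_dvd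
    intro k hk
    have hkn : k ≤ n := by simp only [Finset.mem_range] at hk; omega
    rw [hBk k hkn]
    exact Finset.prod_dvd_prod_of_subset _ _ _ (hsub k hkn)
  -- the product over T2 divides L
  have hPdvd : ∀ s : Finset ℕ, s ⊆ T2 → (∏ d ∈ s, cyclotomic d ℤ) ∣ L := by
    intro s
    induction s using Finset.induction_on with
    | empty => intro _; simpa using one_dvd L
    | @insert a s ha ih =>
      intro hsub'
      rw [Finset.prod_insert ha]
      have hsT : s ⊆ T2 := fun x hx => hsub' (Finset.mem_insert_of_mem hx)
      have hQ := ih hsT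
      have haT : a ∈ T2 := hsub' (Finset.mem_insert_self a s)
      have haT' := haT
      rw [hT2] at haT'
      simp only [Finset.mem_filter] at haT'
      obtain ⟨haIcc, k, hkmem, hklt⟩ := haT'
      have ha2 : 2 ≤ a := (Finset.mem_Icc.mp haIcc).1
      have hk : k ≤ n := (Finset.mem_Icc.mp hkmem).2
      have hφB : cyclotomic a ℤ ∣ B k := by
        rw [hBk k hk]
        exact Finset.dvd_prod_of_mem _ (Finset.mem_filter.mpr ⟨haIcc, hklt⟩)
      have hφL : cyclotomic a ℤ ∣ L :=
        hφB.trans (Finset.dvd_lcm (Finset.mem_range.mpr (by omega)))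
      have hnd : ¬ cyclotomic a ℤ ∣ ∏ d ∈ s, cyclotomic d ℤ := by
        intro hcon
        obtain ⟨e, hes, hdvd⟩ := (hprime a ha2).exists_mem_finset_dvd hcon
        have he2 : 2 ≤ e := by
          have heT := hsT hes
          rw [hT2] at heT
          simp only [Finset.mem_filter, Finset.mem_Icc] at heT
          exact heT.1.1
        exact ha ((hdistinct a e ha2 he2 hdvd) ▸ hes)
      obtain ⟨m, hm⟩ := hQ
      have hdm : cyclotomic a ℤ ∣ (∏ d ∈ s, cyclotomic d ℤ) * m := hm ▸ hφL
      rcases (hprime a ha2).2.2 _ _ hdm with h | h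
      · exact absurd h hnd
      · rw [hm, mul_comm (cyclotomic a ℤ)]
        exact mul_dvd_mul_left _ h
  -- the two index sets agree
  have hTeq : (Finset.Icc 1 n).filter
      (fun d => ∃ k ∈ Finset.Icc 1 n, k / d + (n - k) / d < n / d) = T2 := by
    ext d
    simp only [hT2, Finset.mem_filter, Finset.mem_Icc]
    constructor
    · rintro ⟨⟨h1, h2⟩, k, hk, hlt⟩
      refine ⟨⟨?_, h2⟩, k, hk, hlt⟩
      by_contra hcon
      have hd1 : d = 1 := by omega
      subst hd1
      simp only [Nat.div_one] at hlt
      have hkn : k ≤ n := hk.2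
      omega
    · rintro ⟨⟨h1, h2⟩, hP⟩
      exact ⟨⟨by omega, h2⟩, hP⟩
  rw [hTeq]
  exact associated_of_dvd_dvd hLdvd (hPdvd T2 (le_refl T2))
end

section
/- For any positive integer n, evaluating at q = 1 the product ∏_{d ≤ n, d ∤ (n+1)} Φ_d(q), taken over positive integers d ≤ n that do not divide n+1, yields the integer lcm(1, 2, ..., n+1)/(n+1). -/
open Polynomial

private lemma not_pow_dvd_lcm {p k : ℕ} (hp : p.Prime) (hk : k ≠ 0) (s : Finset ℕ)
    (h0 : 0 ∉ s) (h : ∀ a ∈ s, ¬ p ^ k ∣ a) : ¬ p ^ k ∣ s.lcm id := by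
  induction s using Finset.induction with
  | empty =>
    simp only [Finset.lcm_empty]
    intro hd
    have h1 := Nat.eq_one_of_dvd_one ((normalize_eq (1 : ℕ)) ▸ hd)
    have h2 := hp.two_le
    have h3 : p ≤ p ^ k := Nat.le_self_pow hk p
    omega
  | @insert a s ha ih =>
    have ha0 : a ≠ 0 := fun h' => h0 (h' ▸ Finset.mem_insert_self a s)
    have hs0 : 0 ∉ s := fun h' => h0 (Finset.mem_insert_of_mem h')
    have hls : s.lcm id ≠ 0 := by
      rw [Ne, Finset.lcm_eq_zero_iff]
      intro h'
      simp only [Set.mem_image, id] at h'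
      obtain ⟨x, hx, hx0⟩ := h'
      exact hs0 (hx0 ▸ hx)
    rw [Finset.lcm_insert]
    intro hd
    rw [lcm_eq_nat_lcm] at hd
    simp only [id_eq] at hd
    have hlcm0 : Nat.lcm a (s.lcm id) ≠ 0 := Nat.lcm_ne_zero ha0 hls
    rw [hp.pow_dvd_iff_le_factorization hlcm0, Nat.factorization_lcm ha0 hls,
      Finsupp.sup_apply, le_sup_iff] at hd
    rcases hd with hd | hd
    · exact h a (Finset.mem_insert_self a s)
        ((hp.pow_dvd_iff_le_factorization ha0).2 hd)
    · exact ih hs0 (fun b hb => h b (Finset.mem_insert_of_mem hb))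
        ((hp.pow_dvd_iff_le_factorization hls).2 hd)

private lemma icc_lcm_ne_zero (m : ℕ) : (Finset.Icc 1 m).lcm id ≠ 0 := by
  rw [Ne, Finset.lcm_eq_zero_iff]
  intro h'
  simp only [Set.mem_image, id] at h'
  obtain ⟨x, hx, hx0⟩ := h'
  simp [Finset.mem_Icc] at hx
  omega

private lemma key_lemma : ∀ m : ℕ, 1 ≤ m →
    (∏ d ∈ Finset.Icc 2 m, cyclotomic d ℤ).eval 1 = ((Finset.Icc 1 m).lcm id : ℕ) := by
  intro m hm
  induction m, hm using Nat.le_induction with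
  | base => simp
  | succ m hm ih =>
    have hins2 : Finset.Icc 2 (m + 1) = insert (m + 1) (Finset.Icc 2 m) := by
      ext x; simp [Finset.mem_Icc]; omega
    have hins1 : Finset.Icc 1 (m + 1) = insert (m + 1) (Finset.Icc 1 m) := by
      ext x; simp [Finset.mem_Icc]; omega
    have hnm2 : (m + 1) ∉ Finset.Icc 2 m := by simp
    rw [hins2, Finset.prod_insert hnm2, eval_mul, ih, hins1, Finset.lcm_insert, id,
      lcm_eq_nat_lcm]
    set L := (Finset.Icc 1 m).lcm id with hL
    have hL0 : L ≠ 0 := icc_lcm_ne_zero m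
    by_cases hpp : IsPrimePow (m + 1)
    · obtain ⟨p, k, hp, hk, hpk⟩ := (isPrimePow_nat_iff _).1 hpp
      have hp' : p.Prime := hp
      haveI : Fact p.Prime := ⟨hp'⟩
      -- eval of cyclotomic
      obtain ⟨k', rfl⟩ : ∃ k', k = k' + 1 := ⟨k - 1, by omega⟩
      rw [← hpk, eval_one_cyclotomic_prime_pow]
      -- p ^ k' ∣ L
      have hk'lt : p ^ k' < p ^ (k' + 1) := Nat.pow_lt_pow_right hp'.one_lt (by omega)
      have hk'mem : p ^ k' ∈ Finset.Icc 1 m := by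
        simp only [Finset.mem_Icc]
        constructor
        · exact Nat.one_le_iff_ne_zero.2 (pow_ne_zero _ hp'.pos.ne')
        · omega
      have hdvd : p ^ k' ∣ L := by
        have := Finset.dvd_lcm (f := id) hk'mem
        simpa using this
      -- ¬ p ^ (k'+1) ∣ L
      have hndvd : ¬ p ^ (k' + 1) ∣ L := by
        apply not_pow_dvd_lcm hp' (by omega)
        · simp
        · intro a ha hda
          simp only [Finset.mem_Icc] at ha
          have : p ^ (k' + 1) ≤ a := Nat.le_of_dvd (by omega) hda
          omega
      -- gcd (p ^ (k'+1)) L = p ^ k'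
      have hgcd : Nat.gcd (p ^ (k' + 1)) L = p ^ k' := by
        obtain ⟨j, hj, hjeq⟩ := (Nat.dvd_prime_pow hp').1 (Nat.gcd_dvd_left (p ^ (k' + 1)) L)
        have hjL : p ^ j ∣ L := hjeq ▸ Nat.gcd_dvd_right _ _
        have hjk : j ≤ k' := by
          by_contra hcon
          exact hndvd (dvd_trans (pow_dvd_pow p (by omega)) hjL)
        apply Nat.dvd_antisymm
        · rw [hjeq]; exact pow_dvd_pow p hjk
        · exact Nat.dvd_gcd (pow_dvd_pow p (by omega)) hdvd
      -- lcm = p * L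
      have hmul : Nat.lcm (p ^ (k' + 1)) L = p * L := by
        have h1 := Nat.gcd_mul_lcm (p ^ (k' + 1)) L
        rw [hgcd] at h1
        have h2 : p ^ k' * (p * L) = p ^ (k' + 1) * L := by ring
        have hpk'0 : p ^ k' ≠ 0 := pow_ne_zero _ hp'.pos.ne'
        exact Nat.eq_of_mul_eq_mul_left (Nat.pos_of_ne_zero hpk'0) (h1.trans h2.symm)
      rw [hmul]
      push_cast
      ring
    · -- m + 1 is not a prime power
      have heval : eval 1 (cyclotomic (m + 1) ℤ) = 1 := by
        apply eval_one_cyclotomic_not_prime_pow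
        intro p hp k hk
        rcases Nat.eq_zero_or_pos k with rfl | hk'
        · simp at hk; omega
        · exact hpp ((isPrimePow_nat_iff _).2 ⟨p, k, hp, hk', hk⟩)
      -- m + 1 divides L
      have hdvdL : (m + 1) ∣ L := by
        set p := (m + 1).minFac with hpdef
        have hp : p.Prime := Nat.minFac_prime (by omega)
        have hpdvd : p ∣ m + 1 := Nat.minFac_dvd _
        set a := p ^ (m + 1).factorization p with hadef
        set b := (m + 1) / a with hbdef
        have hab : a * b = m + 1 := Nat.ordProj_mul_ordCompl_eq_self (m + 1) p
        have hcop : Nat.Coprime a b := (Nat.coprime_ordCompl hp (by omega)).pow_left _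
        have ha1 : 1 < a := by
          have : 1 ≤ (m + 1).factorization p :=
            (Nat.Prime.factorization_pos_of_dvd hp (by omega) hpdvd)
          calc 1 < p ^ 1 := by simpa using hp.one_lt
          _ ≤ a := Nat.pow_le_pow_right hp.pos this
        have hb1 : 1 < b := by
          rcases Nat.lt_or_ge b 2 with hb | hb
          · interval_cases b
            · omega
            · exfalso
              rw [mul_one] at hab
              exact hpp ((isPrimePow_nat_iff _).2 ⟨p, (m + 1).factorization p, hp,
                (Nat.Prime.factorization_pos_of_dvd hp (by omega) hpdvd), hab⟩)
          · omega
        have haM : a ≤ m := by nlinarith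
        have hbM : b ≤ m := by nlinarith
        have haL : a ∣ L := by
          have := Finset.dvd_lcm (f := id) (show a ∈ Finset.Icc 1 m by
            simp [Finset.mem_Icc]; omega)
          simpa using this
        have hbL : b ∣ L := by
          have := Finset.dvd_lcm (f := id) (show b ∈ Finset.Icc 1 m by
            simp [Finset.mem_Icc]; omega)
          simpa using this
        exact hab ▸ Nat.Coprime.mul_dvd_of_dvd_of_dvd hcop haL hbL
      have : Nat.lcm (m + 1) L = L :=
        Nat.dvd_antisymm (Nat.lcm_dvd hdvdL dvd_rfl) (Nat.dvd_lcm_right _ _)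
      rw [heval, this, one_mul]

/-- Evaluating at `q = 1` the product of the cyclotomic polynomials `Φ_d(q)` over the
positive integers `d ≤ n` not dividing `n + 1` yields `lcm(1, 2, ..., n+1)/(n+1)`. -/
theorem eval_one_prod_cyclotomic (n : ℕ) (hn : 0 < n) :
    (∏ d ∈ (Finset.Icc 1 n).filter (fun d => ¬ d ∣ (n + 1)), cyclotomic d ℤ).eval 1
      = ((Finset.Icc 1 (n + 1)).lcm id / (n + 1) : ℕ) := by
  set L := (Finset.Icc 1 (n + 1)).lcm id with hL
  have hkey := key_lemma (n + 1) (by omega)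
  have hsplit := Finset.prod_filter_mul_prod_filter_not (Finset.Icc 2 (n + 1))
    (fun d => d ∣ (n + 1)) (fun d => cyclotomic d ℤ)
  have hdivset : (Finset.Icc 2 (n + 1)).filter (fun d => d ∣ (n + 1))
      = (n + 1).divisors.erase 1 := by
    ext d
    simp only [Finset.mem_filter, Finset.mem_Icc, Finset.mem_erase, Nat.mem_divisors]
    constructor
    · rintro ⟨⟨h2, _⟩, hd⟩; exact ⟨by omega, hd, by omega⟩
    · rintro ⟨h1, hd, _⟩
      have := Nat.le_of_dvd (by omega) hd
      have : 1 ≤ d := Nat.pos_of_dvd_of_pos hd (by omega)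
      refine ⟨⟨by omega, by omega⟩, hd⟩
  have hdivprod : (∏ d ∈ (Finset.Icc 2 (n + 1)).filter (fun d => d ∣ (n + 1)),
      cyclotomic d ℤ).eval 1 = (n + 1 : ℤ) := by
    rw [hdivset, prod_cyclotomic_eq_geom_sum (by omega) ℤ]
    simp [eval_finset_sum]
  have hsetEq : (Finset.Icc 2 (n + 1)).filter (fun d => ¬ d ∣ (n + 1))
      = (Finset.Icc 1 n).filter (fun d => ¬ d ∣ (n + 1)) := by
    ext d
    simp only [Finset.mem_filter, Finset.mem_Icc]
    constructor
    · rintro ⟨⟨h2, hle⟩, hd⟩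
      refine ⟨⟨by omega, ?_⟩, hd⟩
      rcases Nat.lt_or_ge d (n + 1) with h | h
      · omega
      · exact absurd (by omega : d = n + 1) (fun h' => hd (h' ▸ dvd_rfl))
    · rintro ⟨⟨h1, hle⟩, hd⟩
      refine ⟨⟨?_, by omega⟩, hd⟩
      rcases Nat.eq_or_lt_of_le h1 with h | h
      · exact absurd (h ▸ one_dvd _) hd
      · omega
  have hdvdL : (n + 1) ∣ L := by
    have := Finset.dvd_lcm (f := id) (show n + 1 ∈ Finset.Icc 1 (n + 1) by
      simp [Finset.mem_Icc])
    simpa using this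
  have hmain : (n + 1 : ℤ) * (∏ d ∈ (Finset.Icc 1 n).filter (fun d => ¬ d ∣ (n + 1)),
      cyclotomic d ℤ).eval 1 = (L : ℤ) := by
    rw [← hkey, ← hsplit, eval_mul, hdivprod, hsetEq]
  have hdiveq : (L / (n + 1) : ℕ) * (n + 1) = L := Nat.div_mul_cancel hdvdL
  have : ((n : ℤ) + 1) ≠ 0 := by positivity
  have hcast : ((L / (n + 1) : ℕ) : ℤ) * ((n : ℤ) + 1) = (L : ℤ) := by
    exact_mod_cast congrArg (Nat.cast : ℕ → ℤ) hdiveq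
  nlinarith [hmain, hcast]
end

section
/- For any positive integer n, evaluating at q = 1 the product ∏_d Φ_d(q), taken over all positive integers d ≤ n for which there exists some k with 1 ≤ k ≤ n satisfying ⌊k/d⌋ + ⌊(n-k)/d⌋ < ⌊n/d⌋, yields the integer lcm(C(n,0), C(n,1), ..., C(n,n)). -/
open Polynomial
open scoped Classical

/-!
For `d ≥ 2`, `Φ_d(1)` is `p` when `d` is a power of the prime `p` and `1` otherwise. The condition
on `d` says that for some `k` the addition `k + (n - k)` carries modulo `d`, which happens exactly
when `d ∤ n + 1`. Hence the product has `p`-adic valuation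
`#{1 ≤ i ≤ log_p n | p ^ i ∤ n + 1} = log_p n - v_p(n + 1)`. The lcm has the same valuation: by
Kummer's theorem `v_p(C(n, k))` counts the `i` at which `k + (n - k)` carries modulo `p ^ i`, and
none of these `p ^ i` divides `n + 1`; conversely `lcm(1, …, n + 1)`, of valuation `log_p (n + 1)`,
divides `(n + 1) · lcm_k C(n, k)` because `m · C(n + 1, m) = (n + 1) · C(n, m - 1)`.
-/

open Finset

theorem div_add_div_sub_lt_div_iff {n k d : ℕ} (hd : 0 < d) (hk : k ≤ n) :
    k / d + (n - k) / d < n / d ↔ d ≤ k % d + (n - k) % d := by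
  have h := Nat.add_div (a := k) (b := n - k) hd
  rw [Nat.add_sub_cancel' hk] at h
  split_ifs at h <;> omega

theorem mod_add_mod_sub_lt_of_dvd_add_one {n k d : ℕ} (hd : d ∣ n + 1) (hk : k ≤ n) :
    k % d + (n - k) % d < d := by
  have hd0 : 0 < d := Nat.pos_of_dvd_of_pos hd n.succ_pos
  have hr : d ∣ k % d + (n - k) % d + 1 := by
    have hk' := Nat.add_sub_cancel' hk
    have := Nat.mod_add_div k d
    have := Nat.mod_add_div (n - k) d
    rw [show n + 1 = k % d + (n - k) % d + 1 + d * (k / d + (n - k) / d) by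
      rw [mul_add]; omega] at hd
    exact (Nat.dvd_add_left (dvd_mul_right d _)).mp hd
  by_contra! hc
  have := Nat.le_of_dvd (by omega) ((Nat.dvd_sub hr (dvd_refl d)))
  have := Nat.mod_lt k hd0
  have := Nat.mod_lt (n - k) hd0
  omega

theorem exists_mod_add_mod_sub_ge_of_not_dvd_add_one {n d : ℕ} (hd : 0 < d) (hdn : d ≤ n)
    (hdvd : ¬ d ∣ n + 1) : ∃ k ∈ Icc 1 n, d ≤ k % d + (n - k) % d := by
  have hdiv := Nat.mod_add_div n d
  have hmod : n % d + 1 < d := by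
    have := Nat.mod_lt n hd
    refine lt_of_le_of_ne this fun h => hdvd ⟨n / d + 1, ?_⟩
    rw [mul_add]
    omega
  refine ⟨n % d + 1, mem_Icc.mpr ⟨by omega, by omega⟩, ?_⟩
  have h := Nat.add_mod_add_ite (n % d + 1) (n - (n % d + 1)) d
  rw [Nat.add_sub_cancel' (by omega)] at h
  rw [Nat.mod_eq_of_lt hmod] at h ⊢
  split_ifs at h with hc
  · exact hc
  · omega

theorem exists_div_add_div_sub_lt_div_iff {n d : ℕ} (hd : 0 < d) (hdn : d ≤ n) :
    (∃ k ∈ Icc 1 n, k / d + (n - k) / d < n / d) ↔ ¬ d ∣ n + 1 := by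
  constructor
  · rintro ⟨k, hk, hcarry⟩ hdvd
    rw [div_add_div_sub_lt_div_iff hd (mem_Icc.mp hk).2] at hcarry
    exact (mod_add_mod_sub_lt_of_dvd_add_one hdvd (mem_Icc.mp hk).2).not_ge hcarry
  · intro hdvd
    obtain ⟨k, hk, hcarry⟩ := exists_mod_add_mod_sub_ge_of_not_dvd_add_one hd hdn hdvd
    exact ⟨k, hk, (div_add_div_sub_lt_div_iff hd (mem_Icc.mp hk).2).mpr hcarry⟩

def expVonMangoldt (d : ℕ) : ℕ := if IsPrimePow d then d.minFac else 1

theorem expVonMangoldt_ne_zero (d : ℕ) : expVonMangoldt d ≠ 0 := by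
  unfold expVonMangoldt
  split_ifs
  · exact (Nat.minFac_pos d).ne'
  · exact one_ne_zero

theorem expVonMangoldt_prime_pow {p k : ℕ} (hp : p.Prime) (hk : k ≠ 0) :
    expVonMangoldt (p ^ k) = p := by
  rw [expVonMangoldt, if_pos (hp.prime.isPrimePow.pow hk), Nat.pow_minFac hk, hp.minFac_eq]

theorem eval_one_cyclotomic_eq_expVonMangoldt {d : ℕ} (hd : 2 ≤ d) :
    (cyclotomic d ℤ).eval 1 = expVonMangoldt d := by
  by_cases h : IsPrimePow d
  · obtain ⟨p, k, hp, hk, rfl⟩ := h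
    have hp := Nat.prime_iff.mpr hp
    have := Fact.mk hp
    obtain ⟨j, rfl⟩ := Nat.exists_eq_add_of_lt hk
    rw [zero_add, eval_one_cyclotomic_prime_pow, expVonMangoldt_prime_pow hp j.succ_ne_zero]
  · rw [eval_one_cyclotomic_not_prime_pow, expVonMangoldt, if_neg h, Nat.cast_one]
    rintro p hp k rfl
    exact h ((Nat.prime_iff.mp hp).isPrimePow.pow (by rintro rfl; simp at hd))

theorem factorization_expVonMangoldt {p : ℕ} (hp : p.Prime) (d : ℕ) :
    (expVonMangoldt d).factorization p = if ∃ i ≠ 0, p ^ i = d then 1 else 0 := by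
  split_ifs with h
  · obtain ⟨i, hi, rfl⟩ := h
    rw [expVonMangoldt_prime_pow hp hi, hp.factorization_self]
  · by_cases hd : IsPrimePow d
    · obtain ⟨q, k, hq, hk, rfl⟩ := hd
      have hq := Nat.prime_iff.mpr hq
      rw [expVonMangoldt_prime_pow hq hk.ne', hq.factorization, Finsupp.single_eq_of_ne]
      rintro rfl
      exact h ⟨k, hk.ne', rfl⟩
    · rw [expVonMangoldt, if_neg hd, Nat.factorization_one, Finsupp.zero_apply]

theorem factorization_prod_expVonMangoldt {p : ℕ} (hp : p.Prime) (n : ℕ) :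
    (∏ d ∈ Icc 1 n with ¬ d ∣ n + 1, expVonMangoldt d).factorization p
      = Nat.log p n - (n + 1).factorization p := by
  have hpowers : {d ∈ Icc 1 n | ¬ d ∣ n + 1 ∧ ∃ i ≠ 0, p ^ i = d}
      = (Ioc ((n + 1).factorization p) (Nat.log p n)).image (p ^ ·) := by
    ext d
    simp only [mem_filter, mem_Icc, mem_image, mem_Ioc]
    constructor
    · rintro ⟨⟨hd1, hdn⟩, hdvd, i, hi, rfl⟩
      refine ⟨i, ⟨?_, ?_⟩, rfl⟩
      · by_contra! hle
        exact hdvd ((pow_dvd_pow p hle).trans (Nat.ordProj_dvd (n + 1) p))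
      · exact (Nat.le_log_iff_pow_le hp.one_lt (by omega)).mpr hdn
    · rintro ⟨i, ⟨hvi, hin⟩, rfl⟩
      have hn : n ≠ 0 := by
        rintro rfl
        rw [Nat.log_zero_right] at hin
        omega
      refine ⟨⟨Nat.one_le_pow _ _ hp.pos, ?_⟩, ?_, i, by omega, rfl⟩
      · exact (Nat.le_log_iff_pow_le hp.one_lt hn).mp hin
      · rw [hp.pow_dvd_iff_le_factorization n.add_one_ne_zero]
        omega
  rw [Nat.factorization_prod fun d _ => expVonMangoldt_ne_zero d, Finsupp.finsetSum_apply]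
  simp only [factorization_expVonMangoldt hp]
  rw [sum_boole, Nat.cast_id, filter_filter, hpowers,
    card_image_of_injective _ (Nat.pow_right_injective hp.two_le), Nat.card_Ioc]

theorem factorization_choose_le_log_sub {p n k : ℕ} (hp : p.Prime) (hk : k ≤ n) :
    (n.choose k).factorization p ≤ Nat.log p n - (n + 1).factorization p := by
  rw [Nat.factorization_choose hp hk (lt_add_one _)]
  refine (card_le_card fun i hi => ?_).trans (Nat.card_Ioc _ _).le
  simp only [mem_filter, mem_Ico, mem_Ioc] at hi ⊢
  refine ⟨?_, by omega⟩
  by_contra! hle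
  have hdvd := (pow_dvd_pow p hle).trans (Nat.ordProj_dvd (n + 1) p)
  exact (mod_add_mod_sub_lt_of_dvd_add_one hdvd hk).not_ge hi.2

theorem lcmUpto_dvd_mul_lcm_choose (n : ℕ) :
    Nat.lcmUpto (n + 1) ∣ (n + 1) * (range (n + 1)).lcm n.choose := by
  refine Finset.lcm_dvd fun m hm => ?_
  obtain ⟨j, rfl⟩ := Nat.exists_eq_add_of_le' (mem_Icc.mp hm).1
  have hj : j ∈ range (n + 1) := mem_range.mpr (by have := (mem_Icc.mp hm).2; omega)
  calc j + 1 ∣ (n + 1) * n.choose j :=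
        ⟨(n + 1).choose (j + 1), by rw [Nat.add_one_mul_choose_eq, mul_comm]⟩
    _ ∣ (n + 1) * (range (n + 1)).lcm n.choose := mul_dvd_mul_left _ (dvd_lcm hj)

theorem lcm_choose_ne_zero (n : ℕ) : (range (n + 1)).lcm n.choose ≠ 0 := by
  simp [Finset.lcm_eq_zero_iff, Nat.choose_eq_zero_iff]

theorem factorization_lcm_choose {p : ℕ} (hp : p.Prime) (n : ℕ) :
    ((range (n + 1)).lcm n.choose).factorization p = Nat.log p n - (n + 1).factorization p := by
  have hchoose : ∀ k ∈ range (n + 1), n.choose k ≠ 0 :=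
    fun k hk => (Nat.choose_pos (Nat.lt_succ_iff.mp (mem_range.mp hk))).ne'
  refine le_antisymm ?_ ?_
  · rw [Finset.factorization_lcm hchoose, Finset.sup_le_iff]
    exact fun k hk => factorization_choose_le_log_sub hp (Nat.lt_succ_iff.mp (mem_range.mp hk))
  · have hlcm := lcm_choose_ne_zero n
    have h := (Nat.factorization_le_iff_dvd (Nat.lcmUpto_ne_zero _)
      (mul_ne_zero n.add_one_ne_zero hlcm)).mpr (lcmUpto_dvd_mul_lcm_choose n) p
    rw [Nat.factorization_lcmUpto _ hp, Nat.factorization_mul n.add_one_ne_zero hlcm,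
      Finsupp.add_apply] at h
    have := Nat.log_mono_right (b := p) (Nat.le_add_right n 1)
    omega

theorem prod_expVonMangoldt_eq_lcm_choose (n : ℕ) :
    ∏ d ∈ Icc 1 n with ¬ d ∣ n + 1, expVonMangoldt d = (range (n + 1)).lcm n.choose := by
  refine Nat.eq_of_factorization_eq (prod_ne_zero_iff.mpr fun d _ => expVonMangoldt_ne_zero d)
    (lcm_choose_ne_zero n) fun p => ?_
  by_cases hp : p.Prime
  · rw [factorization_prod_expVonMangoldt hp, factorization_lcm_choose hp]
  · simp only [Nat.factorization_eq_zero_of_not_prime _ hp]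

theorem eval_one_prod_cyclotomic_eq_lcm_choose_general (n : ℕ) :
    (∏ d ∈ (Finset.Icc 1 n).filter
        (fun d => ∃ k ∈ Finset.Icc 1 n, k / d + (n - k) / d < n / d),
      cyclotomic d ℤ).eval 1
      = ((Finset.range (n + 1)).lcm (n.choose) : ℕ) := by
  have hcarry : {d ∈ Icc 1 n | ∃ k ∈ Icc 1 n, k / d + (n - k) / d < n / d}
      = {d ∈ Icc 1 n | ¬ d ∣ n + 1} := by
    ext d
    simp only [mem_filter]
    exact and_congr_right fun hd =>
      exists_div_add_div_sub_lt_div_iff (mem_Icc.mp hd).1 (mem_Icc.mp hd).2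
  have htwo_le : ∀ d ∈ {d ∈ Icc 1 n | ¬ d ∣ n + 1}, 2 ≤ d := by
    intro d hd
    obtain ⟨hd1, hdvd⟩ := mem_filter.mp hd
    by_contra! hd2
    obtain rfl : d = 1 := by have := (mem_Icc.mp hd1).1; omega
    exact hdvd (one_dvd _)
  rw [hcarry, eval_prod,
    prod_congr rfl fun d hd => eval_one_cyclotomic_eq_expVonMangoldt (htwo_le d hd),
    ← Nat.cast_prod, prod_expVonMangoldt_eq_lcm_choose]

/-- Evaluating at `q = 1` the product of the cyclotomic polynomials `Φ_d(q)`, over all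
positive integers `d ≤ n` such that `⌊k/d⌋ + ⌊(n-k)/d⌋ < ⌊n/d⌋` holds for some `1 ≤ k ≤ n`,
yields `lcm(C(n,0), C(n,1), ..., C(n,n))`. -/
theorem eval_one_prod_cyclotomic_eq_lcm_choose (n : ℕ) (hn : 0 < n) :
    (∏ d ∈ (Finset.Icc 1 n).filter
        (fun d => ∃ k ∈ Finset.Icc 1 n, k / d + (n - k) / d < n / d),
      cyclotomic d ℤ).eval 1
      = ((Finset.range (n + 1)).lcm (n.choose) : ℕ) :=
  eval_one_prod_cyclotomic_eq_lcm_choose_general n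
end

section
/- For any prime p and any positive integer n, the sum over r ≥ 1 of the maximum over 0 ≤ k ≤ n of (⌊n/p^r⌋ - ⌊k/p^r⌋ - ⌊(n-k)/p^r⌋) equals the maximum over 0 ≤ k ≤ n of the sum over r ≥ 1 of (⌊n/p^r⌋ - ⌊k/p^r⌋ - ⌊(n-k)/p^r⌋). (Both sums are finite since the summands vanish for p^r > n.) -/
/-!
For `q = p ^ r` the summand `⌊n/q⌋ - ⌊k/q⌋ - ⌊(n-k)/q⌋` is the indicator `[n mod q < k mod q]`
of a carry out of the last `r` base-`p` digits when adding `k` and `n - k`. The single number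
`k₀ = p ^ ⌊log_p n⌋ - 1`, whose base-`p` digits are all `p - 1`, maximises this indicator for
every `r` at once: for `r ≤ ⌊log_p n⌋` its residue mod `p ^ r` is as large as possible, and for
larger `r` no `k ≤ n` produces a carry. A common maximiser lets the maxima commute with the sum.
-/

theorem Finset.sum_sup'_eq_sup'_sum_of_le {ι α β : Type*} [AddCommMonoid β] [SemilatticeSup β]
    [IsOrderedAddMonoid β] {s : Finset α} (hs : s.Nonempty) (t : Finset ι) (f : ι → α → β)
    {a : α} (ha : a ∈ s) (hmax : ∀ i ∈ t, ∀ b ∈ s, f i b ≤ f i a) :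
    ∑ i ∈ t, s.sup' hs (f i) = s.sup' hs (fun b => ∑ i ∈ t, f i b) := by
  have hsup : ∀ i ∈ t, s.sup' hs (f i) = f i a := fun i hi =>
    le_antisymm (Finset.sup'_le _ _ (hmax i hi)) (Finset.le_sup' _ ha)
  rw [Finset.sum_congr rfl hsup]
  exact le_antisymm (Finset.le_sup' (fun b => ∑ i ∈ t, f i b) ha)
    (Finset.sup'_le _ _ fun b hb => Finset.sum_le_sum fun i hi => hmax i hi b hb)

namespace Nat

theorem cast_div_sub_cast_div_sub_cast_div {q n k : ℕ} (hq : 0 < q) (hk : k ≤ n) :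
    ((n / q : ℕ) : ℤ) - (k / q : ℕ) - ((n - k) / q : ℕ) = if n % q < k % q then 1 else 0 := by
  obtain ⟨m, rfl⟩ := Nat.exists_eq_add_of_le hk
  have hmod := Nat.add_mod_add_ite k m q
  have := Nat.mod_lt k hq
  have := Nat.mod_lt m hq
  rw [Nat.add_sub_cancel_left, Nat.add_div hq]
  split_ifs at hmod ⊢ <;> push_cast <;> omega

theorem sub_one_mod_of_dvd {q m : ℕ} (h : q ∣ m) (hm : 0 < m) : (m - 1) % q = q - 1 := by
  obtain ⟨c, rfl⟩ := h
  have hq : 0 < q := Nat.pos_of_mul_pos_right hm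
  obtain ⟨c, rfl⟩ := Nat.exists_eq_succ_of_ne_zero (Nat.pos_of_mul_pos_left hm).ne'
  rw [Nat.mul_succ, Nat.add_sub_assoc hq, Nat.mul_add_mod,
    Nat.mod_eq_of_lt (Nat.sub_one_lt hq.ne')]

theorem mod_pow_lt_mod_pow_log_sub_one {p n k : ℕ} (hp : 1 < p) (hk : k ≤ n) (r : ℕ)
    (h : n % p ^ r < k % p ^ r) : n % p ^ r < (p ^ Nat.log p n - 1) % p ^ r := by
  by_cases hr : r ≤ Nat.log p n
  · rw [sub_one_mod_of_dvd (pow_dvd_pow p hr) (Nat.pow_pos (by omega))]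
    have := Nat.mod_lt k (Nat.pow_pos (by omega : 0 < p) (n := r))
    omega
  · have hn : n < p ^ r := (Nat.lt_pow_succ_log_self hp n).trans_le
      (Nat.pow_le_pow_right (by omega) (by omega))
    rw [Nat.mod_eq_of_lt hn, Nat.mod_eq_of_lt (hk.trans_lt hn)] at h
    omega

end Nat

/-- For a prime `p` and a positive integer `n`, the sum over `r ≥ 1` of the maximum over
`0 ≤ k ≤ n` of `⌊n/p^r⌋ - ⌊k/p^r⌋ - ⌊(n-k)/p^r⌋` equals the maximum over `0 ≤ k ≤ n` of the
corresponding sum over `r ≥ 1` (all terms with `p^r > n`, in particular with `r > n`, vanish,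
so the sums are truncated at `r = n`). -/
theorem sum_max_eq_max_sum (p n : ℕ) (hp : p.Prime) (hn : 0 < n) :
    ∑ r ∈ Finset.Icc 1 n, (Finset.range (n + 1)).sup' Finset.nonempty_range_add_one
        (fun k => (↑(n / p ^ r) - ↑(k / p ^ r) - ↑((n - k) / p ^ r) : ℤ))
      = (Finset.range (n + 1)).sup' Finset.nonempty_range_add_one
        (fun k => ∑ r ∈ Finset.Icc 1 n,
          (↑(n / p ^ r) - ↑(k / p ^ r) - ↑((n - k) / p ^ r) : ℤ)) := by
  have hk₀ : p ^ Nat.log p n - 1 ∈ Finset.range (n + 1) :=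
    Finset.mem_range_succ_iff.2 ((Nat.sub_le _ _).trans (Nat.pow_log_le_self p hn.ne'))
  refine Finset.sum_sup'_eq_sup'_sum_of_le _ _ _ hk₀ fun r _ k hk => ?_
  have hkn := Finset.mem_range_succ_iff.1 hk
  have hq : 0 < p ^ r := Nat.pow_pos hp.pos
  simp only [Nat.cast_div_sub_cast_div_sub_cast_div hq hkn,
    Nat.cast_div_sub_cast_div_sub_cast_div hq (Finset.mem_range_succ_iff.1 hk₀)]
  split_ifs with hcarry hcarry₀
  · rfl
  · exact absurd (Nat.mod_pow_lt_mod_pow_log_sub_one hp.one_lt hkn r hcarry) hcarry₀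
  · exact zero_le_one
  · rfl
end

section
/- Let p be a prime and n a positive integer with base-p expansion n = ∑_{i=0}^M a_i p^i (digits 0 ≤ a_i ≤ p-1, a_M ≠ 0), and suppose n ≠ p^{M+1} - 1. Let i_0 = min{ i : a_i ≠ p-1 } and set k = p^M - 1. Then ⌊n/p^r⌋ - ⌊k/p^r⌋ - ⌊(n-k)/p^r⌋ equals 0 for 1 ≤ r ≤ i_0 and equals 1 for i_0 + 1 ≤ r ≤ M; consequently ∑_{r≥1} (⌊n/p^r⌋ - ⌊k/p^r⌋ - ⌊(n-k)/p^r⌋) = M - i_0. -/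
/-!
Writing `n = k + (n - k)`, the quantity `⌊n/q⌋ - ⌊k/q⌋ - ⌊(n-k)/q⌋` is the carry out of
the residues mod `q`: it is `1` exactly when `n % q < k % q`. For `q = p^r` with `r ≤ M`,
`k % p^r = p^r - 1` is the largest residue, while `n % p^r` is the number formed by the lowest
`r` digits of `n`; so there is a carry unless these digits are all `p - 1`, i.e. unless
`r ≤ i₀`. For `r > M` both `n` and `k` are below `p^r` and there is no carry.
-/

open Finset

namespace Nat

theorem sum_range_sub_one_mul_pow (p r : ℕ) : ∑ i ∈ range r, (p - 1) * p ^ i = p ^ r - 1 := by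
  induction r with
  | zero => simp
  | succ r ih =>
    rw [sum_range_succ, ih, pow_succ]
    rcases p.eq_zero_or_pos with rfl | hp
    · cases r <;> simp
    · have : 1 ≤ p ^ r := one_le_pow _ _ hp
      have : (p - 1) * p ^ r = p ^ r * p - p ^ r := by rw [Nat.sub_one_mul, mul_comm]
      have : p ^ r ≤ p ^ r * p := Nat.le_mul_of_pos_right _ hp
      omega

theorem pow_sub_one_mod_pow {p r M : ℕ} (hp : 0 < p) (h : r ≤ M) :
    (p ^ M - 1) % p ^ r = p ^ r - 1 := by
  have hr : 0 < p ^ r := pow_pos hp r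
  have hrM : 0 < p ^ (M - r) := pow_pos hp (M - r)
  have : p ^ M - 1 = (p ^ r - 1) + p ^ r * (p ^ (M - r) - 1) := by
    rw [← pow_mul_pow_sub p h, Nat.mul_sub, mul_one]
    have : p ^ r ≤ p ^ r * p ^ (M - r) := Nat.le_mul_of_pos_right _ hrM
    omega
  rw [this, Nat.add_mul_mod_self_left, Nat.mod_eq_of_lt (by omega)]

theorem div_sub_div_sub_sub_div_eq_ite {n k q : ℕ} (hkn : k ≤ n) :
    ((n / q : ℕ) - (k / q : ℕ) - ((n - k) / q : ℕ) : ℤ) =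
      if n % q < k % q then 1 else 0 := by
  rcases q.eq_zero_or_pos with rfl | hq
  · rw [Nat.mod_zero, Nat.mod_zero, if_neg (by omega)]
    simp
  obtain ⟨m, rfl⟩ := Nat.exists_eq_add_of_le hkn
  have hmod := Nat.add_mod_add_ite k m q
  have := Nat.mod_lt m hq
  rw [Nat.add_sub_cancel_left, Nat.add_div hq]
  split_ifs at hmod ⊢ <;> push_cast <;> omega

end Nat

section Digits

variable {p r : ℕ} {a : ℕ → ℕ}

theorem sum_range_mul_pow_le_pow_sub_one (ha : ∀ i < r, a i ≤ p - 1) :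
    ∑ i ∈ range r, a i * p ^ i ≤ p ^ r - 1 :=
  Nat.sum_range_sub_one_mul_pow p r ▸
    sum_le_sum fun i hi => Nat.mul_le_mul_right _ (ha i (mem_range.1 hi))

theorem sum_range_mul_pow_lt_pow_sub_one_iff (hp : 0 < p) (ha : ∀ i < r, a i ≤ p - 1) :
    ∑ i ∈ range r, a i * p ^ i < p ^ r - 1 ↔ ∃ i < r, a i ≠ p - 1 := by
  have hle : ∀ i ∈ range r, a i * p ^ i ≤ (p - 1) * p ^ i :=
    fun i hi => Nat.mul_le_mul_right _ (ha i (mem_range.1 hi))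
  rw [(sum_range_mul_pow_le_pow_sub_one ha).lt_iff_ne, ← Nat.sum_range_sub_one_mul_pow,
    Ne, sum_eq_sum_iff_of_le hle]
  simp only [mem_range, Nat.mul_left_inj (pow_pos hp _).ne', not_forall, exists_prop]

theorem sum_range_mul_pow_lt_pow (hp : 0 < p) (ha : ∀ i < r, a i ≤ p - 1) :
    ∑ i ∈ range r, a i * p ^ i < p ^ r :=
  (sum_range_mul_pow_le_pow_sub_one ha).trans_lt (Nat.sub_one_lt (pow_pos hp r).ne')

theorem sum_range_mul_pow_mod_pow {N : ℕ} (hp : 0 < p) (ha : ∀ i < N, a i ≤ p - 1)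
    (hr : r ≤ N) : (∑ i ∈ range N, a i * p ^ i) % p ^ r = ∑ i ∈ range r, a i * p ^ i := by
  have hdvd : p ^ r ∣ ∑ i ∈ Ico r N, a i * p ^ i :=
    dvd_sum fun i hi => (pow_dvd_pow p (mem_Ico.1 hi).1).mul_left _
  obtain ⟨c, hc⟩ := hdvd
  rw [← sum_range_add_sum_Ico _ hr, hc, Nat.add_mul_mod_self_left,
    Nat.mod_eq_of_lt (sum_range_mul_pow_lt_pow hp fun i hi => ha i (by omega))]

theorem pow_le_sum_range_succ_mul_pow {M : ℕ} (haM : a M ≠ 0) :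
    p ^ M ≤ ∑ i ∈ range (M + 1), a i * p ^ i :=
  calc p ^ M ≤ a M * p ^ M := Nat.le_mul_of_pos_left _ (Nat.pos_of_ne_zero haM)
    _ ≤ _ := single_le_sum (f := fun i => a i * p ^ i) (fun _ _ => Nat.zero_le _)
      (mem_range.2 M.lt_succ_self)

theorem sum_range_mul_pow_mod_pow_lt_iff {M : ℕ} (hp : 0 < p) (ha : ∀ i < M + 1, a i ≤ p - 1)
    (haM : a M ≠ 0) :
    (∑ i ∈ range (M + 1), a i * p ^ i) % p ^ r < (p ^ M - 1) % p ^ r ↔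
      r ≤ M ∧ ∃ i < r, a i ≠ p - 1 := by
  rcases le_or_gt r M with hr | hr
  · rw [Nat.pow_sub_one_mod_pow hp hr, sum_range_mul_pow_mod_pow hp ha (by omega),
      sum_range_mul_pow_lt_pow_sub_one_iff hp fun i hi => ha i (by omega), and_iff_right hr]
  · have hlt := (sum_range_mul_pow_lt_pow hp ha).trans_le (Nat.pow_le_pow_right hp hr)
    have hle := pow_le_sum_range_succ_mul_pow (p := p) haM
    rw [Nat.mod_eq_of_lt hlt, Nat.mod_eq_of_lt (by omega)]
    omega

end Digits

theorem floor_diff_for_special_k_general (p n M : ℕ) (a : ℕ → ℕ)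
    (ha : ∀ i ≤ M, a i ≤ p - 1) (haM : a M ≠ 0)
    (hsum : n = ∑ i ∈ Finset.range (M + 1), a i * p ^ i)
    (hne : n ≠ p ^ (M + 1) - 1)
    (i₀ : ℕ) (hi₀ : a i₀ ≠ p - 1) (hi₀' : ∀ j < i₀, a j = p - 1)
    (k : ℕ) (hk : k = p ^ M - 1) :
    (∀ r, 1 ≤ r → r ≤ i₀ →
        (↑(n / p ^ r) - ↑(k / p ^ r) - ↑((n - k) / p ^ r) : ℤ) = 0) ∧
    (∀ r, i₀ + 1 ≤ r → r ≤ M →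
        (↑(n / p ^ r) - ↑(k / p ^ r) - ↑((n - k) / p ^ r) : ℤ) = 1) ∧
    (∑ r ∈ Finset.Icc 1 n, (↑(n / p ^ r) - ↑(k / p ^ r) - ↑((n - k) / p ^ r) : ℤ)
      = (M : ℤ) - (i₀ : ℤ)) := by
  have hp : 1 < p := by have := ha M le_rfl; omega
  have ha' : ∀ i < M + 1, a i ≤ p - 1 := fun i hi => ha i (by omega)
  have hi₀_lt_iff : ∀ r, (∃ i < r, a i ≠ p - 1) ↔ i₀ < r := fun r =>
    ⟨fun ⟨i, hir, hi⟩ => by by_contra! h; exact hi (hi₀' i (by omega)), fun h => ⟨i₀, h, hi₀⟩⟩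
  have hi₀M : i₀ < M + 1 := by
    rw [← hi₀_lt_iff, ← sum_range_mul_pow_lt_pow_sub_one_iff (by omega) ha', ← hsum]
    exact (hsum ▸ sum_range_mul_pow_le_pow_sub_one ha').lt_of_ne hne
  have hpM : p ^ M ≤ n := hsum ▸ pow_le_sum_range_succ_mul_pow haM
  have hterm : ∀ r, (↑(n / p ^ r) - ↑(k / p ^ r) - ↑((n - k) / p ^ r) : ℤ) =
      if i₀ < r ∧ r ≤ M then 1 else 0 := fun r => by
    rw [Nat.div_sub_div_sub_sub_div_eq_ite (by omega)]
    refine if_congr ?_ rfl rfl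
    rw [hk, hsum, sum_range_mul_pow_mod_pow_lt_iff (by omega) ha' haM, hi₀_lt_iff, and_comm]
  refine ⟨fun r _ hr => by rw [hterm, if_neg (by omega)],
    fun r hr hrM => by rw [hterm, if_pos ⟨hr, hrM⟩], ?_⟩
  have hMn : M ≤ n := (Nat.lt_pow_self hp).le.trans hpM
  have hsupport : {r ∈ Icc 1 n | i₀ < r ∧ r ≤ M} = Ioc i₀ M := by
    ext r
    simp only [mem_filter, mem_Icc, mem_Ioc]
    omega
  rw [sum_congr rfl fun r _ => hterm r, sum_boole, hsupport, Nat.card_Ioc]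
  omega

/-- Let `p` be a prime and `n` a positive integer with base-`p` expansion
`n = ∑_{i=0}^M a_i p^i` (digits `0 ≤ a_i ≤ p-1`, `a_M ≠ 0`), with `n ≠ p^{M+1} - 1`.
Let `i₀ = min{i : a_i ≠ p-1}` (characterized by `a i₀ ≠ p-1` and `a j = p-1` for `j < i₀`)
and set `k = p^M - 1`. Then `⌊n/p^r⌋ - ⌊k/p^r⌋ - ⌊(n-k)/p^r⌋` equals `0` for `1 ≤ r ≤ i₀`
and `1` for `i₀ + 1 ≤ r ≤ M`; consequently the sum over `r ≥ 1` (truncated at `r = n`,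
beyond which all terms vanish) equals `M - i₀`. -/
theorem floor_diff_for_special_k (p n M : ℕ) (a : ℕ → ℕ) (hp : p.Prime) (hn : 0 < n)
    (ha : ∀ i ≤ M, a i ≤ p - 1) (haM : a M ≠ 0)
    (hsum : n = ∑ i ∈ Finset.range (M + 1), a i * p ^ i)
    (hne : n ≠ p ^ (M + 1) - 1)
    (i₀ : ℕ) (hi₀ : a i₀ ≠ p - 1) (hi₀' : ∀ j < i₀, a j = p - 1)
    (k : ℕ) (hk : k = p ^ M - 1) :
    (∀ r, 1 ≤ r → r ≤ i₀ →
        (↑(n / p ^ r) - ↑(k / p ^ r) - ↑((n - k) / p ^ r) : ℤ) = 0) ∧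
    (∀ r, i₀ + 1 ≤ r → r ≤ M →
        (↑(n / p ^ r) - ↑(k / p ^ r) - ↑((n - k) / p ^ r) : ℤ) = 1) ∧
    (∑ r ∈ Finset.Icc 1 n, (↑(n / p ^ r) - ↑(k / p ^ r) - ↑((n - k) / p ^ r) : ℤ)
      = (M : ℤ) - (i₀ : ℤ)) :=
  floor_diff_for_special_k_general p n M a ha haM hsum hne i₀ hi₀ hi₀' k hk
end

section
/- For any prime p and any positive integer n, the maximum over 0 ≤ k ≤ n of the p-adic valuation of the binomial coefficient C(n,k) equals the number of positive integers r such that p^r ≤ n and p^r does not divide n+1. -/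
/-!
By Kummer's theorem, `v_p (C(n, k))` is the number of `i ≥ 1` with `n % p^i < k % p^i`, i.e. the
number of borrows when `k` is subtracted from `n` in base `p`. Such a borrow forces `p^i ≤ n` and
`n % p^i ≠ p^i - 1`, i.e. `p^i ∤ n + 1`. Conversely `k = p^L - 1` with `L = log_p n` has
`k % p^i = p^i - 1` for all `i ≤ L`, so it borrows at every such position.
-/

open Finset

namespace Nat

theorem le_mod_add_mod_iff_mod_lt {a b c : ℕ} (hc : 0 < c) :
    c ≤ a % c + b % c ↔ (a + b) % c < a % c := by
  have hb : b % c < c := mod_lt b hc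
  have := add_mod_add_ite a b c
  split_ifs at this with h <;> simp only [h, true_iff, false_iff] <;> omega

theorem dvd_add_one_iff_mod_add_one_eq {m : ℕ} (n : ℕ) (hm : 0 < m) :
    m ∣ n + 1 ↔ n % m + 1 = m := by
  have hdiv : n + 1 = m * (n / m) + (n % m + 1) := by rw [← add_assoc, div_add_mod]
  rw [hdiv, Nat.dvd_add_right (dvd_mul_right m _)]
  refine ⟨fun h => eq_of_dvd_of_lt_two_mul (succ_ne_zero _) h ?_, fun h => h.symm ▸ dvd_rfl⟩
  have := mod_lt n hm
  omega

theorem le_and_not_dvd_add_one_of_mod_lt_mod {m n k : ℕ} (hkn : k ≤ n) (h : n % m < k % m) :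
    m ≤ n ∧ ¬ m ∣ n + 1 := by
  have hm : 0 < m := pos_of_ne_zero fun hm => by simp [hm] at h; omega
  refine ⟨le_of_not_gt fun hnm => ?_, fun hdvd => ?_⟩
  · rw [mod_eq_of_lt hnm] at h
    have := mod_le k m
    omega
  · rw [dvd_add_one_iff_mod_add_one_eq n hm] at hdvd
    have := mod_lt k hm
    omega

theorem mod_lt_pred_mod_of_not_dvd_add_one {m n a : ℕ} (hma : m ∣ a) (ha : 0 < a)
    (hn : ¬ m ∣ n + 1) : n % m < (a - 1) % m := by
  have hm : 0 < m := pos_of_dvd_of_pos hma ha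
  rw [dvd_add_one_iff_mod_add_one_eq n hm] at hn
  have hpred := (dvd_add_one_iff_mod_add_one_eq (a - 1) hm).1 (by rwa [Nat.sub_add_cancel ha])
  have := mod_lt n hm
  omega

theorem pow_log_sub_one_le (b n : ℕ) : b ^ log b n - 1 ≤ n := by
  rcases eq_or_ne n 0 with rfl | hn
  · simp
  · exact (pow_log_le_self b hn).trans' (sub_le _ _)

end Nat

theorem padicValNat_choose_eq_card_mod_lt_mod {p n k : ℕ} [Fact p.Prime] (hkn : k ≤ n) :
    padicValNat p (n.choose k) = #{i ∈ Icc 1 n | n % p ^ i < k % p ^ i} := by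
  rw [padicValNat_choose hkn (Nat.lt_add_one_iff.2 (Nat.log_le_self p n)),
    Ico_add_one_right_eq_Icc]
  congr 1
  refine filter_congr fun i _ => ?_
  rw [Nat.le_mod_add_mod_iff_mod_lt (pow_pos (Fact.out : p.Prime).pos i), Nat.add_sub_cancel' hkn]

theorem max_padic_val_choose_general (p n : ℕ) (hp : p.Prime) :
    (Finset.range (n + 1)).sup (fun k => padicValNat p (n.choose k))
      = ((Finset.Icc 1 n).filter (fun r => p ^ r ≤ n ∧ ¬ p ^ r ∣ (n + 1))).card := by
  have := Fact.mk hp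
  apply le_antisymm
  · refine Finset.sup_le fun k hk => ?_
    have hkn : k ≤ n := Nat.lt_succ_iff.mp (mem_range.mp hk)
    rw [padicValNat_choose_eq_card_mod_lt_mod hkn]
    exact card_le_card <| monotone_filter_right _ fun i _ =>
      Nat.le_and_not_dvd_add_one_of_mod_lt_mod hkn
  · set L := Nat.log p n
    have hwit : p ^ L - 1 ≤ n := Nat.pow_log_sub_one_le p n
    calc _ ≤ padicValNat p (n.choose (p ^ L - 1)) := by
          rw [padicValNat_choose_eq_card_mod_lt_mod hwit]
          refine card_le_card <| monotone_filter_right _ fun i _ ⟨hle, hndvd⟩ =>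
            Nat.mod_lt_pred_mod_of_not_dvd_add_one ?_ (pow_pos hp.pos L) hndvd
          exact pow_dvd_pow p (Nat.le_log_of_pow_le hp.one_lt hle)
      _ ≤ _ := le_sup (f := fun k => padicValNat p (n.choose k)) (mem_range.2 (by omega))

/-- For a prime `p` and a positive integer `n`, the maximum over `0 ≤ k ≤ n` of the `p`-adic
valuation of the binomial coefficient `C(n,k)` equals the number of positive integers `r`
such that `p^r ≤ n` and `p^r` does not divide `n + 1`. -/
theorem max_padic_val_choose (p n : ℕ) (hp : p.Prime) (hn : 0 < n) :
    (Finset.range (n + 1)).sup (fun k => padicValNat p (n.choose k))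
      = ((Finset.Icc 1 n).filter (fun r => p ^ r ≤ n ∧ ¬ p ^ r ∣ (n + 1))).card :=
  max_padic_val_choose_general p n hp
end

section
/- Let p be a prime, n a positive integer, and let k_1, k_2, ..., k_m ≤ n and r_1 < r_2 < ... < r_m be positive integers such that ⌊n/p^{r_i}⌋ - ⌊k_i/p^{r_i}⌋ - ⌊(n-k_i)/p^{r_i}⌋ = 1 for all i = 1, 2, ..., m. Then there exists a single positive integer k ≤ n such that ⌊n/p^{r_i}⌋ - ⌊k/p^{r_i}⌋ - ⌊(n-k)/p^{r_i}⌋ = 1 for all i = 1, 2, ..., m. -/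
/-!
Writing `n = k + (n - k)`, the difference `⌊n/q⌋ - ⌊k/q⌋ - ⌊(n-k)/q⌋` is the carry out of the
residues mod `q`, so it equals `1` exactly when `n % q < k % q`. All the moduli `p ^ rᵢ` divide the
largest one `Q = p ^ rₘ`, hence `K = n - Q + 1 ≡ n + 1` modulo each of them; and `n % p ^ rᵢ < kᵢ % p ^ rᵢ`
leaves room for `n % p ^ rᵢ + 1` below `p ^ rᵢ`, so `K` has residue `n % p ^ rᵢ + 1` and again
produces a carry.
-/

lemma Nat.cast_div_sub_div_sub_div_eq_one_iff {q k n : ℕ} (hk : k ≤ n) :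
    ((n / q : ℕ) - (k / q : ℕ) - ((n - k) / q : ℕ) : ℤ) = 1 ↔ n % q < k % q := by
  obtain ⟨b, rfl⟩ := Nat.exists_eq_add_of_le hk
  rw [Nat.add_sub_cancel_left]
  rcases Nat.eq_zero_or_pos q with rfl | hq
  · simp
  have hcarry := Nat.add_mod_add_ite k b q
  have hkq := Nat.mod_lt k hq
  have hbq := Nat.mod_lt b hq
  rw [Nat.add_div hq]
  split_ifs at hcarry ⊢ <;> push_cast <;> omega

lemma Nat.pos_of_mod_lt_mod {q k n : ℕ} (hk : k ≤ n) (h : n % q < k % q) : 0 < q := by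
  refine Nat.pos_of_ne_zero fun hq => ?_
  simp only [hq, Nat.mod_zero] at h
  omega

lemma Nat.le_of_mod_lt_mod {q k n : ℕ} (hk : k ≤ n) (h : n % q < k % q) : q ≤ n := by
  by_contra! hnq
  rw [Nat.mod_eq_of_lt hnq, Nat.mod_eq_of_lt (hk.trans_lt hnq)] at h
  omega

lemma Nat.mod_lt_mod_sub_add_one {d q k n : ℕ} (hdq : d ∣ q) (hqn : q ≤ n)
    (h : n % d < k % d) : n % d < (n - q + 1) % d := by
  obtain ⟨c, rfl⟩ := hdq
  rcases Nat.eq_zero_or_pos d with rfl | hd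
  · simp
  have hroom : n % d + 1 < d := (Nat.succ_le_of_lt h).trans_lt (Nat.mod_lt k hd)
  have hshift : (n - d * c + 1) % d = (n + 1) % d := by
    rw [← Nat.add_mul_mod_self_left (n - d * c + 1) d c]
    congr 1
    omega
  rw [hshift, Nat.add_mod, Nat.one_mod_eq_one.2 (by omega), Nat.mod_eq_of_lt hroom]
  omega

theorem exists_common_k_general (p n m : ℕ) (hn : 0 < n)
    (k r : Fin m → ℕ) (hkn : ∀ i, k i ≤ n) (hr : StrictMono r)
    (h : ∀ i, (↑(n / p ^ r i) - ↑(k i / p ^ r i) - ↑((n - k i) / p ^ r i) : ℤ) = 1) :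
    ∃ K, 0 < K ∧ K ≤ n ∧
      ∀ i, (↑(n / p ^ r i) - ↑(K / p ^ r i) - ↑((n - K) / p ^ r i) : ℤ) = 1 := by
  have hcarry i : n % p ^ r i < k i % p ^ r i :=
    (Nat.cast_div_sub_div_sub_div_eq_one_iff (hkn i)).1 (h i)
  cases m with
  | zero => exact ⟨n, hn, le_rfl, fun i => i.elim0⟩
  | succ m =>
    have hQ := hcarry (Fin.last m)
    have hQpos := Nat.pos_of_mod_lt_mod (hkn _) hQ
    have hQn := Nat.le_of_mod_lt_mod (hkn _) hQ
    refine ⟨n - p ^ r (Fin.last m) + 1, by omega, by omega, fun i => ?_⟩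
    rw [Nat.cast_div_sub_div_sub_div_eq_one_iff (by omega)]
    exact Nat.mod_lt_mod_sub_add_one (pow_dvd_pow p (hr.monotone (Fin.le_last i))) hQn (hcarry i)

/-- Let `p` be a prime, `n` a positive integer, and `k₁, ..., kₘ ≤ n`,
`r₁ < r₂ < ⋯ < rₘ` positive integers such that
`⌊n/p^{rᵢ}⌋ - ⌊kᵢ/p^{rᵢ}⌋ - ⌊(n-kᵢ)/p^{rᵢ}⌋ = 1` for each `i`. Then there is a single
positive integer `k ≤ n` with `⌊n/p^{rᵢ}⌋ - ⌊k/p^{rᵢ}⌋ - ⌊(n-k)/p^{rᵢ}⌋ = 1` for all `i`. -/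
theorem exists_common_k (p n m : ℕ) (hp : p.Prime) (hn : 0 < n)
    (k r : Fin m → ℕ) (hkpos : ∀ i, 0 < k i) (hkn : ∀ i, k i ≤ n)
    (hrpos : ∀ i, 0 < r i) (hr : StrictMono r)
    (h : ∀ i, (↑(n / p ^ r i) - ↑(k i / p ^ r i) - ↑((n - k i) / p ^ r i) : ℤ) = 1) :
    ∃ K, 0 < K ∧ K ≤ n ∧
      ∀ i, (↑(n / p ^ r i) - ↑(K / p ^ r i) - ↑((n - K) / p ^ r i) : ℤ) = 1 :=
  exists_common_k_general p n m hn k r hkn hr h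
end

section
/- For any positive integer n, lcm(1, 2, ..., n) ≥ 2^{n-1}. -/
/-!
The Leibniz harmonic triangle identity
`1 / (m * C(n + 1, m)) = 1 / (m * C(n, m)) - 1 / ((m + 1) * C(n + 1, m + 1))`
shows, by induction on `n - m`, that `m * C(n, m)` divides `lcm(1, ..., n)` for `1 ≤ m ≤ n`.
Equivalently `(n + 1) * C(n, k) ∣ lcm(1, ..., n + 1)` for all `k ≤ n` (the divisibility half of
Farhi's identity), and summing over `k` gives
`(n + 1) * 2 ^ n ≤ (n + 1) * lcm(1, ..., n + 1)`.
-/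

theorem dvd_of_mul_sub_eq_mul {R : Type*} [CommRing R] [IsDomain R] {a b c x : R}
    (ha : a ∣ x) (hb : b ∣ x) (hab : a * b ≠ 0) (h : c * (b - a) = a * b) : c ∣ x := by
  obtain ⟨y, rfl⟩ := ha
  obtain ⟨z, hz⟩ := hb
  refine ⟨y - z, mul_left_cancel₀ hab ?_⟩
  linear_combination (-a * c) * hz - a * y * h

namespace Nat

theorem lcmUpto_dvd_lcmUpto {m n : ℕ} (h : m ≤ n) : lcmUpto m ∣ lcmUpto n :=
  Finset.lcm_mono (Finset.Icc_subset_Icc_right h)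

theorem dvd_lcmUpto {m n : ℕ} (hm : 0 < m) (h : m ≤ n) : m ∣ lcmUpto n :=
  Finset.dvd_lcm (f := id) (Finset.mem_Icc.mpr ⟨hm, h⟩)

theorem mul_choose_dvd_lcmUpto {m n : ℕ} (hm : 0 < m) (hmn : m ≤ n) :
    m * n.choose m ∣ lcmUpto n := by
  obtain ⟨s, rfl⟩ := exists_add_of_le hmn
  induction s generalizing m with
  | zero => simpa using dvd_lcmUpto hm le_rfl
  | succ s ih =>
    have left : m * (m + s).choose m ∣ lcmUpto (m + s + 1) :=
      (ih hm le_self_add).trans (lcmUpto_dvd_lcmUpto (le_succ _))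
    have right : (m + 1) * (m + s + 1).choose (m + 1) ∣ lcmUpto (m + s + 1) := by
      simpa only [Nat.add_right_comm] using ih (m := m + 1) m.succ_pos le_self_add
    have pascal₁ := add_one_mul_choose_eq (m + s) m
    have pascal₂ : (m + s).choose m * (m + s + 1) = (m + s + 1).choose m * (s + 1) := by
      rw [choose_mul_succ_eq]; congr 2; omega
    zify at pascal₁ pascal₂
    rw [← Nat.add_assoc, ← Int.natCast_dvd_natCast]
    refine dvd_of_mul_sub_eq_mul (Int.natCast_dvd_natCast.2 left)
      (Int.natCast_dvd_natCast.2 right) ?_ ?_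
    · simp [hm.ne', choose_eq_zero_iff, Nat.cast_add_one_ne_zero]
    · push_cast
      linear_combination (m * (m + s).choose m - m * (m + s + 1).choose m : ℤ) * pascal₁
        - (m * (m + s).choose m : ℤ) * pascal₂

theorem add_one_mul_choose_dvd_lcmUpto {n k : ℕ} (hk : k ≤ n) :
    (n + 1) * n.choose k ∣ lcmUpto (n + 1) := by
  rw [add_one_mul_choose_eq, mul_comm]
  exact mul_choose_dvd_lcmUpto k.succ_pos (succ_le_succ hk)

theorem two_pow_le_lcmUpto_add_one (n : ℕ) : 2 ^ n ≤ lcmUpto (n + 1) := by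
  refine le_of_mul_le_mul_left ?_ n.succ_pos
  calc (n + 1) * 2 ^ n = ∑ k ∈ Finset.range (n + 1), (n + 1) * n.choose k := by
        rw [← Finset.mul_sum, sum_range_choose]
    _ ≤ ∑ _k ∈ Finset.range (n + 1), lcmUpto (n + 1) := by
        gcongr with k hk
        exact le_of_dvd (lcmUpto_pos _)
          (add_one_mul_choose_dvd_lcmUpto (Finset.mem_range_succ_iff.mp hk))
    _ = (n + 1) * lcmUpto (n + 1) := by simp

end Nat

/-- For any positive integer `n`, `lcm(1, 2, ..., n) ≥ 2^{n-1}`. -/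
theorem lcm_ge_two_pow (n : ℕ) (hn : 0 < n) :
    2 ^ (n - 1) ≤ (Finset.Icc 1 n).lcm id := by
  obtain ⟨k, rfl⟩ := Nat.exists_eq_succ_of_ne_zero hn.ne'
  exact Nat.two_pow_le_lcmUpto_add_one k
end
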